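/- On the 13-cell diamond stencil, define the 12×9 matrix A with entries A_{jk} = ⟨φ_k⟩_{Ω_j} (j = 1,…,12, k = 1,…,9) and the vector b with b_j = ū_j − ū_0, for arbitrary real data ū_0,…,ū_{12}. Then the vector c = (c_1,…,c_9) given by c_1 = [36(ū_5−ū_4) − 5(ū_{11}−ū_{10}) − (ū_8−ū_6) − (ū_3−ū_1)]/(48Δx), c_2 = [36(ū_2−ū_7) − 5(ū_9−ū_{12}) − (ū_1−ū_6) − (ū_3−ū_8)]/(48Δy), c_3 = [76(ū_{11}−2ū_0+ū_{10}) + 19(ū_5−2ū_0+ū_4) + 17(ū_3−2ū_2+ū_1) + 17(ū_6−2ū_7+ū_8) + 32(ū_2−2ū_0+ū_7) − 8(ū_9−2ū_0+ū_{12})]/(714Δx²), c_4 = [76(ū_9−2ū_0+ū_{12}) + 19(ū_2−2ū_0+ū_7) + 17(ū_1−2ū_4+ū_6) + 17(ū_3−2ū_5+ū_8) + 32(ū_4−2ū_0+ū_5) − 8(ū_{10}−2ū_0+ū_{11})]/(714Δy²), c_5 = [(ū_3−ū_1)−(ū_8−ū_6)]/(4ΔxΔy), c_6 = [(ū_{11}−ū_{10})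 − 2(ū_5−ū_4)]/(12Δx³), c_7 = [(ū_9−ū_{12}) − 2(ū_2−ū_7)]/(12Δy³), c_8 = [(ū_3−ū_1) − 2(ū_5−ū_4) + (ū_8−ū_6)]/(4ΔxΔy²), c_9 = [(ū_1−ū_6) − 2(ū_2−ū_7) + (ū_3−ū_8)]/(4Δx²Δy) is the unique minimizer over ℝ⁹ of ‖Ac − b‖², i.e. the unique solution of the normal equations AᵀA c = Aᵀ b. -/

import Mathlib

open MeasureTheory intervalIntegral

/-- Cell average of `f` over the rectangle of size `dx × dy` centered at `(xc, yc)`. -/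
noncomputable def cellAvg (xc yc dx dy : ℝ) (f : ℝ → ℝ → ℝ) : ℝ :=
  (dx * dy)⁻¹ *
    ∫ x in (xc - dx / 2)..(xc + dx / 2),
      ∫ y in (yc - dy / 2)..(yc + dy / 2), f x y

/-- Offsets (in units of `Δx`, `Δy`) of the centers of the cells `Ω_1, …, Ω_12`
of the 13-cell diamond stencil with respect to the center `(x_0, y_0)` of `Ω_0`. -/
def off12 : Fin 12 → ℝ × ℝ :=
  ![(-1, 1), (0, 1), (1, 1), (-1, 0), (1, 0), (-1, -1), (0, -1), (1, -1),
    (0, 2), (-2, 0), (2, 0), (0, -2)]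

/-- Basis polynomials `φ_1, …, φ_9` for the cubic optimal polynomial. -/
noncomputable def phi9 (x0 y0 dx dy : ℝ) : Fin 9 → ℝ → ℝ → ℝ :=
  ![fun x _ => x - x0,
    fun _ y => y - y0,
    fun x _ => (x - x0) ^ 2 - dx ^ 2 / 12,
    fun _ y => (y - y0) ^ 2 - dy ^ 2 / 12,
    fun x y => (x - x0) * (y - y0),
    fun x _ => (x - x0) ^ 3,
    fun _ y => (y - y0) ^ 3,
    fun x y => (x - x0) * (y - y0) ^ 2,
    fun x y => (x - x0) ^ 2 * (y - y0)]

/-!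
Each `φ_k` is a product of a power of `x - x₀` and a power of `y - y₀` (shifted by a constant
for `φ_3`, `φ_4`), so its average over the cell centred at `(x₀ + aΔx, y₀ + bΔy)` is
`Δ_k · m_k(a, b)`, where `Δ_k` is the matching monomial in `Δx, Δy` and `m_k` a polynomial with
rational coefficients. Hence `A = M · diag Δ` for a rational `12 × 9` matrix `M` that does not
depend on the mesh, and the claimed coefficients are `c = diag(Δ)⁻¹ L b` for a rational `9 × 12`
matrix `L`. Exact arithmetic gives `L M = 1` and `Mᵀ M L = Mᵀ`: `M` is injective and `L b`
solves the normal equations, so `‖M x - b‖² = ‖M L b - b‖² + ‖M (x - L b)‖²` is minimal exactly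
at `x = L b`.
-/

open Matrix

theorem cellAvg_mul (xc yc dx dy : ℝ) (g h : ℝ → ℝ) :
    cellAvg xc yc dx dy (fun x y => g x * h y) =
      (dx⁻¹ * ∫ x in (xc - dx / 2)..(xc + dx / 2), g x) *
        (dy⁻¹ * ∫ y in (yc - dy / 2)..(yc + dy / 2), h y) := by
  simp only [cellAvg, intervalIntegral.integral_const_mul, intervalIntegral.integral_mul_const,
    mul_inv]
  ring

theorem inv_mul_integral_sub_pow (c z : ℝ) (n : ℕ) {d : ℝ} (hd : d ≠ 0) :
    d⁻¹ * ∫ x in (c - d / 2)..(c + d / 2), (x - z) ^ n =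
      ((c - z + d / 2) ^ (n + 1) - (c - z - d / 2) ^ (n + 1)) / ((n + 1) * d) := by
  rw [integral_comp_sub_right (· ^ n), integral_pow]
  field_simp
  ring

theorem inv_mul_integral_sub_sq_sub_const (c z e : ℝ) {d : ℝ} (hd : d ≠ 0) :
    d⁻¹ * ∫ x in (c - d / 2)..(c + d / 2), ((x - z) ^ 2 - e) =
      (c - z) ^ 2 + d ^ 2 / 12 - e := by
  rw [intervalIntegral.integral_sub
    ((by fun_prop : Continuous fun x : ℝ => (x - z) ^ 2).intervalIntegrable _ _)
    intervalIntegrable_const, mul_sub, inv_mul_integral_sub_pow _ _ _ hd,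
    intervalIntegral.integral_const, smul_eq_mul]
  field_simp
  ring

/-- The averages of `φ_1, …, φ_9` (for `x₀ = y₀ = 0`, `Δx = Δy = 1`) over the unit cell centred
at `(a, b)`. -/
def cellMoment {K : Type*} [Field K] (a b : K) : Fin 9 → K :=
  ![a, b, a ^ 2, b ^ 2, a * b, a ^ 3 + a / 4, b ^ 3 + b / 4, a * (b ^ 2 + 1 / 12),
    (a ^ 2 + 1 / 12) * b]

def phiScale (dx dy : ℝ) : Fin 9 → ℝ :=
  ![dx, dy, dx ^ 2, dy ^ 2, dx * dy, dx ^ 3, dy ^ 3, dx * dy ^ 2, dx ^ 2 * dy]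

theorem phiScale_ne_zero {dx dy : ℝ} (hdx : dx ≠ 0) (hdy : dy ≠ 0) (k : Fin 9) :
    phiScale dx dy k ≠ 0 := by
  fin_cases k <;> simp [phiScale, hdx, hdy]

theorem map_cellMoment {K L : Type*} [Field K] [Field L] (f : K →+* L) (a b : K) (k : Fin 9) :
    f (cellMoment a b k) = cellMoment (f a) (f b) k := by
  fin_cases k <;> simp [cellMoment, map_ofNat]

theorem cellAvg_phi9 (x0 y0 a b : ℝ) {dx dy : ℝ} (hdx : dx ≠ 0) (hdy : dy ≠ 0) (k : Fin 9) :
    cellAvg (x0 + a * dx) (y0 + b * dy) dx dy (phi9 x0 y0 dx dy k) =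
      cellMoment a b k * phiScale dx dy k := by
  have hx := fun n => inv_mul_integral_sub_pow (x0 + a * dx) x0 n hdx
  have hy := fun n => inv_mul_integral_sub_pow (y0 + b * dy) y0 n hdy
  fin_cases k <;> dsimp only [Fin.reduceFinMk, Fin.isValue]
  · rw [show phi9 x0 y0 dx dy 0 = fun x y => (x - x0) ^ 1 * (y - y0) ^ 0 by
      funext x y; simp [phi9], cellAvg_mul, hx, hy]
    simp [cellMoment, phiScale]; field_simp; ring
  · rw [show phi9 x0 y0 dx dy 1 = fun x y => (x - x0) ^ 0 * (y - y0) ^ 1 by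
      funext x y; simp [phi9], cellAvg_mul, hx, hy]
    simp [cellMoment, phiScale]; field_simp; ring
  · rw [show phi9 x0 y0 dx dy 2 = fun x y => ((x - x0) ^ 2 - dx ^ 2 / 12) * (y - y0) ^ 0 by
      funext x y; simp [phi9], cellAvg_mul, hy,
      inv_mul_integral_sub_sq_sub_const _ _ _ hdx]
    simp [cellMoment, phiScale]; field_simp
  · rw [show phi9 x0 y0 dx dy 3 = fun x y => (x - x0) ^ 0 * ((y - y0) ^ 2 - dy ^ 2 / 12) by
      funext x y; simp [phi9], cellAvg_mul, hx,
      inv_mul_integral_sub_sq_sub_const _ _ _ hdy]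
    simp [cellMoment, phiScale]; field_simp
  · rw [show phi9 x0 y0 dx dy 4 = fun x y => (x - x0) ^ 1 * (y - y0) ^ 1 by
      funext x y; simp [phi9], cellAvg_mul, hx, hy]
    simp [cellMoment, phiScale]; field_simp; ring
  · rw [show phi9 x0 y0 dx dy 5 = fun x y => (x - x0) ^ 3 * (y - y0) ^ 0 by
      funext x y; simp [phi9], cellAvg_mul, hx, hy]
    simp [cellMoment, phiScale]; field_simp; ring
  · rw [show phi9 x0 y0 dx dy 6 = fun x y => (x - x0) ^ 0 * (y - y0) ^ 3 by
      funext x y; simp [phi9], cellAvg_mul, hx, hy]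
    simp [cellMoment, phiScale]; field_simp; ring
  · rw [show phi9 x0 y0 dx dy 7 = fun x y => (x - x0) ^ 1 * (y - y0) ^ 2 by
      funext x y; simp [phi9], cellAvg_mul, hx, hy]
    simp [cellMoment, phiScale]; field_simp; ring
  · rw [show phi9 x0 y0 dx dy 8 = fun x y => (x - x0) ^ 2 * (y - y0) ^ 1 by
      funext x y; simp [phi9], cellAvg_mul, hx, hy]
    simp [cellMoment, phiScale]; field_simp; ring

def stencilOffset : Fin 12 → ℤ × ℤ :=
  ![(-1, 1), (0, 1), (1, 1), (-1, 0), (1, 0), (-1, -1), (0, -1), (1, -1),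
    (0, 2), (-2, 0), (2, 0), (0, -2)]

theorem off12_eq_stencilOffset (j : Fin 12) :
    off12 j = (((stencilOffset j).1 : ℝ), ((stencilOffset j).2 : ℝ)) := by
  fin_cases j <;> simp [off12, stencilOffset]

def stencilMatrix : Matrix (Fin 12) (Fin 9) ℚ :=
  of fun j => cellMoment ((stencilOffset j).1 : ℚ) ((stencilOffset j).2 : ℚ)

theorem cellAvg_phi9_stencil (x0 y0 : ℝ) {dx dy : ℝ} (hdx : dx ≠ 0) (hdy : dy ≠ 0) (j : Fin 12)
    (k : Fin 9) :
    cellAvg (x0 + (off12 j).1 * dx) (y0 + (off12 j).2 * dy) dx dy (phi9 x0 y0 dx dy k) =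
      (stencilMatrix j k : ℝ) * phiScale dx dy k := by
  rw [off12_eq_stencilOffset, cellAvg_phi9 _ _ _ _ hdx hdy, stencilMatrix, of_apply,
    ← Rat.coe_castHom, map_cellMoment, map_intCast, map_intCast]

/-- Row `k` lists the coefficients of `ū_1 - ū_0, …, ū_12 - ū_0` in `Δ_k c_k` for the claimed
coefficients `c`, where `Δ = phiScale Δx Δy`. -/
def stencilPinv : Matrix (Fin 9) (Fin 12) ℚ :=
  !![1/48, 0, -1/48, -3/4, 3/4, 1/48, 0, -1/48, 0, 5/48, -5/48, 0;
    -1/48, 3/4, -1/48, 0, 0, 1/48, -3/4, 1/48, -5/48, 0, 0, 5/48;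
    1/42, -1/357, 1/42, 19/714, 19/714, 1/42, -1/357, 1/42, -4/357, 38/357, 38/357, -4/357;
    1/42, 19/714, 1/42, -1/357, -1/357, 1/42, 19/714, 1/42, 38/357, -4/357, -4/357, 38/357;
    -1/4, 0, 1/4, 0, 0, 1/4, 0, -1/4, 0, 0, 0, 0;
    0, 0, 0, 1/6, -1/6, 0, 0, 0, 0, -1/12, 1/12, 0;
    0, -1/6, 0, 0, 0, 0, 1/6, 0, 1/12, 0, 0, -1/12;
    -1/4, 0, 1/4, 1/2, -1/2, -1/4, 0, 1/4, 0, 0, 0, 0;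
    1/4, -1/2, 1/4, 0, 0, -1/4, 1/2, -1/4, 0, 0, 0, 0]

theorem stencilPinv_mul_stencilMatrix : stencilPinv * stencilMatrix = 1 := by
  decide +kernel

theorem stencilMatrix_transpose_mul_mul_stencilPinv :
    stencilMatrixᵀ * stencilMatrix * stencilPinv = stencilMatrixᵀ := by
  decide +kernel

section LeastSquares

variable {m n : Type*} [Fintype m] [Fintype n]

theorem dotProduct_self_add_mulVec_of_transpose_mulVec_eq_zero (M : Matrix m n ℝ) {r : m → ℝ}
    (hr : Mᵀ *ᵥ r = 0) (d : n → ℝ) :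
    (r + M *ᵥ d) ⬝ᵥ (r + M *ᵥ d) = r ⬝ᵥ r + (M *ᵥ d) ⬝ᵥ (M *ᵥ d) := by
  have hcross : r ⬝ᵥ (M *ᵥ d) = 0 := by
    rw [dotProduct_mulVec, ← mulVec_transpose, hr, zero_dotProduct]
  simp only [add_dotProduct, dotProduct_add, dotProduct_comm (M *ᵥ d) r, hcross]
  ring

theorem dotProduct_self_mulVec_sub_lt [DecidableEq n] (M : Matrix m n ℝ) (L : Matrix n m ℝ)
    (hL : L * M = 1) (hnormal : Mᵀ * M * L = Mᵀ) (b : m → ℝ) {x : n → ℝ}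
    (hx : x ≠ L *ᵥ b) :
    (M *ᵥ (L *ᵥ b) - b) ⬝ᵥ (M *ᵥ (L *ᵥ b) - b) < (M *ᵥ x - b) ⬝ᵥ (M *ᵥ x - b) := by
  have hr : Mᵀ *ᵥ (M *ᵥ (L *ᵥ b) - b) = 0 := by
    rw [mulVec_sub, mulVec_mulVec, mulVec_mulVec, hnormal, sub_self]
  have hMd : M *ᵥ (x - L *ᵥ b) ≠ 0 := fun h => by
    apply hx
    rw [← sub_eq_zero, ← one_mulVec (x - L *ᵥ b), ← hL, ← mulVec_mulVec, h, mulVec_zero]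
  have hsplit : M *ᵥ x - b = (M *ᵥ (L *ᵥ b) - b) + M *ᵥ (x - L *ᵥ b) := by
    rw [mulVec_sub]; abel
  rw [hsplit, dotProduct_self_add_mulVec_of_transpose_mulVec_eq_zero M hr]
  exact lt_add_of_pos_right _ (by simpa using dotProduct_star_self_pos_iff.mpr hMd)

end LeastSquares

/-- the explicit coefficients `c_1, …, c_9` of the fourth-order CWENO
optimal polynomial are the unique minimizer of the least-squares functional
`‖Ac − b‖²` with `A_{jk} = ⟨φ_k⟩_{Ω_j}` and `b_j = ū_j − ū_0`, `j = 1, …, 12`. -/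
theorem cweno4_optimal_polynomial_least_squares
    (x0 y0 dx dy : ℝ) (hdx : 0 < dx) (hdy : 0 < dy) (u : Fin 13 → ℝ) :
    let A : Fin 12 → Fin 9 → ℝ := fun j k =>
      cellAvg (x0 + (off12 j).1 * dx) (y0 + (off12 j).2 * dy) dx dy
        (phi9 x0 y0 dx dy k)
    let b : Fin 12 → ℝ := fun j => u j.succ - u 0
    let Φ : (Fin 9 → ℝ) → ℝ := fun cc => ∑ j, (∑ k, cc k * A j k - b j) ^ 2
    let c : Fin 9 → ℝ :=
      ![(1 / (48 * dx)) *
          (36 * (u 5 - u 4) - 5 * (u 11 - u 10) - (u 8 - u 6) - (u 3 - u 1)),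
        (1 / (48 * dy)) *
          (36 * (u 2 - u 7) - 5 * (u 9 - u 12) - (u 1 - u 6) - (u 3 - u 8)),
        (1 / (714 * dx ^ 2)) *
          (76 * (u 11 - 2 * u 0 + u 10) + 19 * (u 5 - 2 * u 0 + u 4) +
            17 * (u 3 - 2 * u 2 + u 1) + 17 * (u 6 - 2 * u 7 + u 8) +
            32 * (u 2 - 2 * u 0 + u 7) - 8 * (u 9 - 2 * u 0 + u 12)),
        (1 / (714 * dy ^ 2)) *
          (76 * (u 9 - 2 * u 0 + u 12) + 19 * (u 2 - 2 * u 0 + u 7) +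
            17 * (u 1 - 2 * u 4 + u 6) + 17 * (u 3 - 2 * u 5 + u 8) +
            32 * (u 4 - 2 * u 0 + u 5) - 8 * (u 10 - 2 * u 0 + u 11)),
        (1 / (4 * dx * dy)) * ((u 3 - u 1) - (u 8 - u 6)),
        (1 / (12 * dx ^ 3)) * ((u 11 - u 10) - 2 * (u 5 - u 4)),
        (1 / (12 * dy ^ 3)) * ((u 9 - u 12) - 2 * (u 2 - u 7)),
        (1 / (4 * dx * dy ^ 2)) * ((u 3 - u 1) - 2 * (u 5 - u 4) + (u 8 - u 6)),
        (1 / (4 * dx ^ 2 * dy)) * ((u 1 - u 6) - 2 * (u 2 - u 7) + (u 3 - u 8))]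
    ∀ c' : Fin 9 → ℝ, c' ≠ c → Φ c < Φ c' := by
  intro A b Φ c c' hne
  set s := phiScale dx dy
  set M : Matrix (Fin 12) (Fin 9) ℝ := stencilMatrix.map (Rat.castHom ℝ)
  set L : Matrix (Fin 9) (Fin 12) ℝ := stencilPinv.map (Rat.castHom ℝ)
  have hA : ∀ j k, A j k = M j k * s k := cellAvg_phi9_stencil x0 y0 hdx.ne' hdy.ne'
  have hrow : ∀ x j, ∑ k, x k * A j k = (M *ᵥ (s * x)) j := fun x j => by
    unfold mulVec dotProduct
    exact Finset.sum_congr rfl fun k _ => by rw [hA, Pi.mul_apply]; ring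
  have hΦ : ∀ x, Φ x = (M *ᵥ (s * x) - b) ⬝ᵥ (M *ᵥ (s * x) - b) := fun x => by
    simp only [Φ, hrow, dotProduct, Pi.sub_apply, sq]
  have hc : s * c = L *ᵥ b := by
    funext k
    fin_cases k <;> simp [s, c, L, b, phiScale, stencilPinv, mulVec, dotProduct,
      Fin.sum_univ_succ] <;> field_simp <;> ring
  rw [hΦ, hΦ, hc]
  refine dotProduct_self_mulVec_sub_lt M L ?_ ?_ b fun h => hne (funext fun k => ?_)
  · rw [← Matrix.map_mul, stencilPinv_mul_stencilMatrix, Matrix.map_one _ (map_zero _) (map_one _)]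
  · rw [← transpose_map, ← Matrix.map_mul, ← Matrix.map_mul,
      stencilMatrix_transpose_mul_mul_stencilPinv]
  · exact mul_left_cancel₀ (phiScale_ne_zero hdx.ne' hdy.ne' k) (congrFun (h.trans hc.symm) k)
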